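/- Let d, N ≥ 1, β > 0, n > 0, and let f : ℝ^d → ℝ be continuous with f ≥ 0 and Lipschitz continuous with constant L_f on B_n = {x ∈ ℝ^d : |x| ≤ n}. Then there exists a constant C > 0, depending only on β, n, L_f, and the infimum and supremum of f on B_n, such that for all continuous paths φ = (φ^1,…,φ^N), φ̂ = (φ̂^1,…,φ̂^N) : [0,∞) → (ℝ^d)^N with sup_{0≤s≤t}|φ^i(s)| ≤ n and sup_{0≤s≤t}|φ̂^i(s)| ≤ n for every i, one has ∑_{i=1}^N |p_f[φ^i](t) − p_f[φ̂^i](t)|² ≤ C ∑_{i=1}^N (sup_{0≤s≤t}|φ^i(s) − φ̂^i(s)|)² for all t > 0. -/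

import Mathlib

/-! The personal best is the ratio `A⁻¹ • B` of a weight integral `A = ∫ w` and a weighted
path integral `B = ∫ w • φ`, with weights `w = exp (-β f ∘ φ)`. On `B_n` the weights lie in
`[exp (-β M), 1]` (`M` an upper bound of `f` on `B_n`) and, `exp` being 1-Lipschitz on `(-∞, 0]`,
they differ by at most `β L_f sup |φ - φ̂|` between the two paths. Hence `A`, `A'` and `B`, `B'`
differ by `O(t sup |φ - φ̂|)` while `A ≥ t exp (-β M)`, and the factors `t` cancel. -/

open scoped BigOperators

/-- The weighted personal best `p_f[φ](t)` along a path `φ`. -/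
noncomputable def personalBest {d : ℕ} (β : ℝ) (f : EuclideanSpace ℝ (Fin d) → ℝ)
    (φ : ℝ → EuclideanSpace ℝ (Fin d)) (t : ℝ) : EuclideanSpace ℝ (Fin d) :=
  if t = 0 then φ 0
  else (∫ s in (0:ℝ)..t, Real.exp (-(β * f (φ s))))⁻¹ •
    ∫ s in (0:ℝ)..t, Real.exp (-(β * f (φ s))) • φ s

open Set Real MeasureTheory

lemma exp_neg_sub_exp_neg_le {a b : ℝ} (hb : 0 ≤ b) : exp (-b) - exp (-a) ≤ |a - b| :=
  calc exp (-b) - exp (-a) = exp (-b) * (1 - exp (b - a)) := by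
        rw [mul_sub, ← exp_add]; ring_nf
    _ ≤ exp (-b) * (a - b) :=
        mul_le_mul_of_nonneg_left (by linarith [add_one_le_exp (b - a)]) (exp_pos _).le
    _ ≤ exp (-b) * |a - b| := by gcongr; exact le_abs_self _
    _ ≤ 1 * |a - b| := by gcongr; exact exp_le_one_iff.2 (by linarith)
    _ = |a - b| := one_mul _

lemma abs_exp_neg_sub_exp_neg_le {a b : ℝ} (ha : 0 ≤ a) (hb : 0 ≤ b) :
    |exp (-a) - exp (-b)| ≤ |a - b| :=
  abs_sub_le_iff.2
    ⟨by simpa only [abs_sub_comm] using exp_neg_sub_exp_neg_le (a := b) ha,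
      exp_neg_sub_exp_neg_le hb⟩

section WeightedAverage

variable {E : Type*} [NormedAddCommGroup E] [NormedSpace ℝ E]

lemma norm_smul_sub_smul_le {w w' : ℝ} {x x' : E} (hw₀ : 0 ≤ w) (hw₁ : w ≤ 1) :
    ‖w • x - w' • x'‖ ≤ ‖x - x'‖ + |w - w'| * ‖x'‖ :=
  calc ‖w • x - w' • x'‖ = ‖w • (x - x') + (w - w') • x'‖ := by
        rw [smul_sub, sub_smul, sub_add_sub_cancel]
    _ ≤ w * ‖x - x'‖ + |w - w'| * ‖x'‖ := by
        grw [norm_add_le, norm_smul, norm_smul, Real.norm_of_nonneg hw₀, Real.norm_eq_abs]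
    _ ≤ ‖x - x'‖ + |w - w'| * ‖x'‖ := by
        gcongr; exact mul_le_of_le_one_left (norm_nonneg _) hw₁

lemma norm_inv_smul_sub_inv_smul_le {A A' R : ℝ} {B B' : E} (hA : 0 < A) (hA' : 0 < A')
    (hB' : ‖B'‖ ≤ R * A') :
    ‖A⁻¹ • B - A'⁻¹ • B'‖ ≤ (‖B - B'‖ + R * |A - A'|) / A := by
  have hB'_avg : ‖A'⁻¹ • B'‖ ≤ R := by
    rw [norm_smul, norm_inv, Real.norm_of_nonneg hA'.le, inv_mul_le_iff₀ hA', mul_comm]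
    exact hB'
  have hsplit : A⁻¹ • B - A'⁻¹ • B' = A⁻¹ • ((B - B') + (A' - A) • A'⁻¹ • B') := by
    have hcoef : A⁻¹ * (A' - A) = A⁻¹ * A' - 1 := by rw [mul_sub, inv_mul_cancel₀ hA.ne']
    rw [smul_add, smul_smul, smul_smul, hcoef, sub_mul, one_mul, mul_assoc,
      mul_inv_cancel₀ hA'.ne', mul_one, smul_sub, sub_smul]
    abel
  rw [hsplit, norm_smul, norm_inv, Real.norm_of_nonneg hA.le, inv_mul_eq_div, abs_sub_comm]
  gcongr
  grw [norm_add_le, norm_smul, Real.norm_eq_abs, hB'_avg, mul_comm]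

lemma norm_weightedAverage_sub_le {w w' : ℝ → ℝ} {φ φ' : ℝ → E} {t m ε D R : ℝ}
    (ht : 0 < t) (hm : 0 < m)
    (hw : ContinuousOn w (Icc 0 t)) (hw' : ContinuousOn w' (Icc 0 t))
    (hφ : ContinuousOn φ (Icc 0 t)) (hφ' : ContinuousOn φ' (Icc 0 t))
    (hw_mem : ∀ s ∈ Icc 0 t, w s ∈ Icc m 1) (hw'_ge : ∀ s ∈ Icc 0 t, m ≤ w' s)
    (hww' : ∀ s ∈ Icc 0 t, |w s - w' s| ≤ ε) (hφφ' : ∀ s ∈ Icc 0 t, ‖φ s - φ' s‖ ≤ D)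
    (hφ'R : ∀ s ∈ Icc 0 t, ‖φ' s‖ ≤ R) :
    ‖(∫ s in (0:ℝ)..t, w s)⁻¹ • (∫ s in (0:ℝ)..t, w s • φ s) -
        (∫ s in (0:ℝ)..t, w' s)⁻¹ • ∫ s in (0:ℝ)..t, w' s • φ' s‖ ≤
      (D + 2 * R * ε) / m := by
  have hIcc : uIcc 0 t = Icc 0 t := uIcc_of_le ht.le
  have hIoc : ∀ s ∈ uIoc 0 t, s ∈ Icc 0 t := fun _ hs ↦
    Ioc_subset_Icc_self (uIoc_of_le ht.le ▸ hs)
  have hwi := (hIcc ▸ hw).intervalIntegrable (μ := volume)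
  have hw'i := (hIcc ▸ hw').intervalIntegrable (μ := volume)
  have hwφi : IntervalIntegrable (fun s ↦ w s • φ s) volume 0 t :=
    (hIcc ▸ hw.smul hφ).intervalIntegrable
  have hw'φ'i : IntervalIntegrable (fun s ↦ w' s • φ' s) volume 0 t :=
    (hIcc ▸ hw'.smul hφ').intervalIntegrable
  have hR : 0 ≤ R := (norm_nonneg _).trans (hφ'R 0 ⟨le_rfl, ht.le⟩)
  have hA : t * m ≤ ∫ s in (0:ℝ)..t, w s := by
    simpa using intervalIntegral.integral_mono_on ht.le intervalIntegrable_const hwi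
      fun s hs ↦ (hw_mem s hs).1
  have hA' : t * m ≤ ∫ s in (0:ℝ)..t, w' s := by
    simpa using intervalIntegral.integral_mono_on ht.le intervalIntegrable_const hw'i hw'_ge
  have hAA' : |(∫ s in (0:ℝ)..t, w s) - ∫ s in (0:ℝ)..t, w' s| ≤ ε * t := by
    rw [← intervalIntegral.integral_sub hwi hw'i, ← Real.norm_eq_abs]
    refine (intervalIntegral.norm_integral_le_of_norm_le_const fun s hs ↦
      (Real.norm_eq_abs _).trans_le (hww' s (hIoc s hs))).trans_eq ?_
    rw [sub_zero, abs_of_pos ht]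
  have hBB' : ‖(∫ s in (0:ℝ)..t, w s • φ s) - ∫ s in (0:ℝ)..t, w' s • φ' s‖ ≤
      (D + ε * R) * t := by
    rw [← intervalIntegral.integral_sub hwφi hw'φ'i]
    refine (intervalIntegral.norm_integral_le_of_norm_le_const fun s hs ↦ ?_).trans_eq
      (by rw [sub_zero, abs_of_pos ht])
    have hs := hIoc s hs
    grw [norm_smul_sub_smul_le (hm.le.trans (hw_mem s hs).1) (hw_mem s hs).2, hφφ' s hs,
      hφ'R s hs, hww' s hs]
  have hB' : ‖∫ s in (0:ℝ)..t, w' s • φ' s‖ ≤ R * ∫ s in (0:ℝ)..t, w' s := by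
    rw [← intervalIntegral.integral_const_mul]
    refine intervalIntegral.norm_integral_le_of_norm_le ht.le
      (Filter.Eventually.of_forall fun s hs ↦ ?_) (hw'i.const_mul R)
    have hs := Ioc_subset_Icc_self hs
    rw [norm_smul, Real.norm_of_nonneg (hm.le.trans (hw'_ge s hs)), mul_comm]
    exact mul_le_mul_of_nonneg_right (hφ'R s hs) (hm.le.trans (hw'_ge s hs))
  have htm : 0 < t * m := mul_pos ht hm
  calc _ ≤ _ := norm_inv_smul_sub_inv_smul_le (htm.trans_le hA) (htm.trans_le hA') hB'
    _ ≤ ((D + ε * R) * t + R * (ε * t)) / (t * m) := by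
        gcongr
        exact (add_nonneg (norm_nonneg _) (mul_nonneg hR (abs_nonneg _))).trans
          (by gcongr)
    _ = (D + 2 * R * ε) / m := by field_simp; ring

end WeightedAverage

lemma norm_personalBest_sub_le {d : ℕ} {β n Lf M t D : ℝ} {f : EuclideanSpace ℝ (Fin d) → ℝ}
    {φ φ' : ℝ → EuclideanSpace ℝ (Fin d)} (hβ : 0 ≤ β) (hLf : 0 ≤ Lf) (hf : Continuous f)
    (hfpos : ∀ x, 0 ≤ f x) (hM : ∀ x : EuclideanSpace ℝ (Fin d), ‖x‖ ≤ n → f x ≤ M)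
    (hfLip : ∀ x y : EuclideanSpace ℝ (Fin d), ‖x‖ ≤ n → ‖y‖ ≤ n →
      |f x - f y| ≤ Lf * ‖x - y‖)
    (ht : 0 < t) (hφ : ContinuousOn φ (Icc 0 t)) (hφ' : ContinuousOn φ' (Icc 0 t))
    (hφn : ∀ s ∈ Icc 0 t, ‖φ s‖ ≤ n) (hφ'n : ∀ s ∈ Icc 0 t, ‖φ' s‖ ≤ n)
    (hD : ∀ s ∈ Icc 0 t, ‖φ s - φ' s‖ ≤ D) :
    ‖personalBest β f φ t - personalBest β f φ' t‖ ≤ exp (β * M) * (1 + 2 * β * Lf * n) * D := by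
  have hweight : Continuous fun x ↦ exp (-(β * f x)) := by fun_prop
  have hweight_ge : ∀ x, ‖x‖ ≤ n → exp (-(β * M)) ≤ exp (-(β * f x)) := fun x hx ↦
    exp_le_exp.2 (neg_le_neg (mul_le_mul_of_nonneg_left (hM x hx) hβ))
  have hweight_le : ∀ x, exp (-(β * f x)) ≤ 1 := fun x ↦
    exp_le_one_iff.2 (neg_nonpos.2 (mul_nonneg hβ (hfpos x)))
  have hweight_sub : ∀ s ∈ Icc 0 t,
      |exp (-(β * f (φ s))) - exp (-(β * f (φ' s)))| ≤ β * Lf * D := fun s hs ↦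
    calc _ ≤ |β * f (φ s) - β * f (φ' s)| :=
          abs_exp_neg_sub_exp_neg_le (mul_nonneg hβ (hfpos _)) (mul_nonneg hβ (hfpos _))
      _ = β * |f (φ s) - f (φ' s)| := by rw [← mul_sub, abs_mul, abs_of_nonneg hβ]
      _ ≤ β * (Lf * D) := by grw [hfLip _ _ (hφn s hs) (hφ'n s hs), hD s hs]
      _ = β * Lf * D := (mul_assoc _ _ _).symm
  unfold personalBest
  rw [if_neg ht.ne', if_neg ht.ne']
  refine (norm_weightedAverage_sub_le ht (exp_pos _) (hweight.comp_continuousOn hφ)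
    (hweight.comp_continuousOn hφ') hφ hφ'
    (fun s hs ↦ ⟨hweight_ge _ (hφn s hs), hweight_le _⟩) (fun s hs ↦ hweight_ge _ (hφ'n s hs))
    hweight_sub hD hφ'n).trans_eq ?_
  rw [exp_neg, div_inv_eq_mul]
  ring

theorem stmt_4_general (d N : ℕ)
    (β n Lf : ℝ) (hβ : 0 < β) (hn : 0 < n) (hLf : 0 ≤ Lf)
    (f : EuclideanSpace ℝ (Fin d) → ℝ) (hf : Continuous f) (hfpos : ∀ x, 0 ≤ f x)
    (hfLip : ∀ x y : EuclideanSpace ℝ (Fin d), ‖x‖ ≤ n → ‖y‖ ≤ n →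
      |f x - f y| ≤ Lf * ‖x - y‖) :
    ∃ C > 0, ∀ (φ φ' : Fin N → ℝ → EuclideanSpace ℝ (Fin d)),
      (∀ i, ContinuousOn (φ i) (Set.Ici 0)) → (∀ i, ContinuousOn (φ' i) (Set.Ici 0)) →
      ∀ t : ℝ, 0 < t →
      (∀ i, ∀ s ∈ Set.Icc (0:ℝ) t, ‖φ i s‖ ≤ n) →
      (∀ i, ∀ s ∈ Set.Icc (0:ℝ) t, ‖φ' i s‖ ≤ n) →
      ∑ i, ‖personalBest β f (φ i) t - personalBest β f (φ' i) t‖ ^ 2 ≤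
        C * ∑ i, (⨆ s : Set.Icc (0:ℝ) t, ‖φ i s.1 - φ' i s.1‖) ^ 2 := by
  obtain ⟨M, hM⟩ := (isCompact_closedBall (0 : EuclideanSpace ℝ (Fin d)) n).bddAbove_image
    hf.continuousOn
  have hM' : ∀ x : EuclideanSpace ℝ (Fin d), ‖x‖ ≤ n → f x ≤ M := fun x hx ↦
    hM ⟨x, mem_closedBall_zero_iff.2 hx, rfl⟩
  refine ⟨(exp (β * M) * (1 + 2 * β * Lf * n)) ^ 2, by positivity, ?_⟩
  intro φ φ' hφ hφ' t ht hφn hφ'n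
  rw [Finset.mul_sum]
  refine Finset.sum_le_sum fun i _ ↦ ?_
  have hIcc : Icc 0 t ⊆ Ici 0 := Icc_subset_Ici_self
  have hφi := (hφ i).mono hIcc
  have hφ'i := (hφ' i).mono hIcc
  have hD : ∀ s ∈ Icc 0 t, ‖φ i s - φ' i s‖ ≤ ⨆ s : Icc (0:ℝ) t, ‖φ i s.1 - φ' i s.1‖ :=
    fun s hs ↦ le_ciSup_set (isCompact_Icc.bddAbove_image (hφi.sub hφ'i).norm) hs
  rw [← mul_pow]
  exact pow_le_pow_left₀ (norm_nonneg _) (norm_personalBest_sub_le hβ.le hLf hf hfpos hM' hfLip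
    ht hφi hφ'i (hφn i) (hφ'n i) hD) 2

theorem stmt_4 (d N : ℕ) (hd : 1 ≤ d) (hN : 1 ≤ N)
    (β n Lf : ℝ) (hβ : 0 < β) (hn : 0 < n) (hLf : 0 ≤ Lf)
    (f : EuclideanSpace ℝ (Fin d) → ℝ) (hf : Continuous f) (hfpos : ∀ x, 0 ≤ f x)
    (hfLip : ∀ x y : EuclideanSpace ℝ (Fin d), ‖x‖ ≤ n → ‖y‖ ≤ n →
      |f x - f y| ≤ Lf * ‖x - y‖) :
    ∃ C > 0, ∀ (φ φ' : Fin N → ℝ → EuclideanSpace ℝ (Fin d)),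
      (∀ i, ContinuousOn (φ i) (Set.Ici 0)) → (∀ i, ContinuousOn (φ' i) (Set.Ici 0)) →
      ∀ t : ℝ, 0 < t →
      (∀ i, ∀ s ∈ Set.Icc (0:ℝ) t, ‖φ i s‖ ≤ n) →
      (∀ i, ∀ s ∈ Set.Icc (0:ℝ) t, ‖φ' i s‖ ≤ n) →
      ∑ i, ‖personalBest β f (φ i) t - personalBest β f (φ' i) t‖ ^ 2 ≤
        C * ∑ i, (⨆ s : Set.Icc (0:ℝ) t, ‖φ i s.1 - φ' i s.1‖) ^ 2 :=
  stmt_4_general d N β n Lf hβ hn hLf f hf hfpos hfLip
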